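/- Let (X, r) be a non-degenerate involutive set-theoretic solution of the Yang–Baxter equation with |X| = m ≥ 2, let λ ∈ P(n, m) have positive parts λ_1 ≥ ⋯ ≥ λ_k > 0, let x ∈ X^n be a λ-element, and let φ : S_n → Perm(X^n) be the group homomorphism with φ((j, j+1)) = b_j for all 1 ≤ j ≤ n−1. Then the stabilizer {g ∈ S_n : φ(g)(x) = x} is exactly the Young subgroup S_{λ_1} × S_{λ_2} × ⋯ × S_{λ_k}, i.e. the subgroup of all permutations of {1, …, n} mapping each of the consecutive blocks {λ_1 + ⋯ + λ_{i−1} + 1, …, λ_1 + ⋯ + λ_i} (1 ≤ i ≤ k) to itself. -/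

import Mathlib

/-! Set-theoretic solutions of the Yang–Baxter equation.
For `r : X × X → X × X` we write `r (i, j) = (σ i j, τ j i)`, i.e. `σ_i(j) = σ i j` and
`τ_j(i) = τ j i`. -/

variable {X : Type*}

/-- The map `r : X × X → X × X` determined by families `σ`, `τ` via
`r (i, j) = (σ_i(j), τ_j(i))`. -/
def rmapF (σ τ : X → X → X) : X × X → X × X := fun p => (σ p.1 p.2, τ p.2 p.1)

/-- `r × id` on `X × X × X`. -/
def ridF (r : X × X → X × X) : X × X × X → X × X × X :=
  fun p => ((r (p.1, p.2.1)).1, (r (p.1, p.2.1)).2, p.2.2)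

/-- `id × r` on `X × X × X`. -/
def idrF (r : X × X → X × X) : X × X × X → X × X × X := fun p => (p.1, r p.2)

/-- The braid (Yang–Baxter) equation `(r × id) ∘ (id × r) ∘ (r × id) = (id × r) ∘ (r × id) ∘ (id × r)`. -/
def BraidEq (r : X × X → X × X) : Prop :=
  ridF r ∘ idrF r ∘ ridF r = idrF r ∘ ridF r ∘ idrF r

/-- A non-degenerate involutive set-theoretic solution of the Yang–Baxter equation on `X`:
the maps `σ_i` and `τ_i` are bijective (packaged as equivalences), the induced map
`r (i, j) = (σ_i(j), τ_j(i))` satisfies the braid equation, and `r ∘ r = id`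
(which in particular makes `r` bijective). -/
structure NDIS (X : Type*) where
  σ : X → X ≃ X
  τ : X → X ≃ X
  braid : BraidEq (rmapF (fun i => ⇑(σ i)) (fun i => ⇑(τ i)))
  invol : ∀ p : X × X,
    rmapF (fun i => ⇑(σ i)) (fun i => ⇑(τ i))
      (rmapF (fun i => ⇑(σ i)) (fun i => ⇑(τ i)) p) = p

namespace NDIS

/-- The map `r` of the solution. -/
def r (S : NDIS X) : X × X → X × X := rmapF (fun i => ⇑(S.σ i)) (fun i => ⇑(S.τ i))

/-- The diagonal `D : X → X`, `D(i) = τ_i⁻¹(i)`. -/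
def D (S : NDIS X) : X → X := fun i => (S.τ i).symm i

end NDIS
namespace NDIS

/-- One elementary move on words: apply `r` to two adjacent letters. -/
def Step (S : NDIS X) (x y : List X) : Prop :=
  ∃ (u v : List X) (i j : X), x = u ++ i :: j :: v ∧ y = u ++ S.σ i j :: S.τ j i :: v

/-- The orbit `O(x)` of a word `x` under the equivalence relation generated by the
adjacent `r`-moves (equivalently, the orbit of the induced `S_n`-action on `X^n`). -/
def Orb (S : NDIS X) (x : List X) : Set (List X) := {y | Relation.EqvGen S.Step x y}

/-- `Ψ_k(a) = (D^{k−1}(a), …, D(a), a)`. -/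
def Psi (S : NDIS X) (k : ℕ) (a : X) : List X :=
  (List.range k).map fun t => S.D^[k - 1 - t] a

/-- The inverse of the diagonal `D`. -/
noncomputable def Dinv (S : NDIS X) [Nonempty X] : X → X := Function.invFun S.D

/-- `Ψ_{−k}(a) = (a, D^{−1}(a), …, D^{−(k−1)}(a))`. -/
noncomputable def PsiNeg (S : NDIS X) [Nonempty X] (k : ℕ) (a : X) : List X :=
  (List.range k).map fun t => S.Dinv^[t] a

/-- `σ_x = σ_{a_1} ∘ σ_{a_2} ∘ ⋯ ∘ σ_{a_k}` for a word `x = (a_1, …, a_k)`. -/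
def sigmaWord (S : NDIS X) (x : List X) (z : X) : X := x.foldr (fun a w => S.σ a w) z

/-- `τ_x = τ_{a_k} ∘ ⋯ ∘ τ_{a_2} ∘ τ_{a_1}` for a word `x = (a_1, …, a_k)`. -/
def tauWord (S : NDIS X) (x : List X) (z : X) : X := x.foldl (fun w a => S.τ a w) z

/-- The concatenation `Ψ_{L 0}(a 0) Ψ_{L 1}(a 1) ⋯ Ψ_{L (k-1)}(a (k-1))`. -/
def word (S : NDIS X) {k : ℕ} (L : Fin k → ℕ) (a : Fin k → X) : List X :=
  (List.ofFn fun t => S.Psi (L t) (a t)).flatten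

/-- The concatenation `Ψ_{L (i+1)}(a (i+1)) ⋯ Ψ_{L (j-1)}(a (j-1))` of the blocks strictly
between positions `i` and `j` (the empty word when `j = i + 1`). -/
def midword (S : NDIS X) {k : ℕ} (L : Fin k → ℕ) (a : Fin k → X) (i j : Fin k) : List X :=
  (((List.ofFn fun t => S.Psi (L t) (a t)).drop ((i : ℕ) + 1)).take ((j : ℕ) - (i : ℕ) - 1)).flatten

/-- The family `a` yields a `λ`-element: `a_j ≠ D^{−λ_j}(τ_w(a_i))` for all `i < j`, with
`w = Ψ_{λ_{i+1}}(a_{i+1}) ⋯ Ψ_{λ_{j−1}}(a_{j−1})`. -/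
def IsLambdaFamily (S : NDIS X) [Nonempty X] {k : ℕ} (L : Fin k → ℕ) (a : Fin k → X) : Prop :=
  ∀ i j : Fin k, i < j →
    a j ≠ S.Dinv^[L j] (S.tauWord (S.midword L a i j) (a i))

/-- `x` is a `λ`-element for the partition with positive parts `L 0 ≥ L 1 ≥ ⋯ ≥ L (k-1) > 0`. -/
def IsLambdaWord (S : NDIS X) [Nonempty X] {k : ℕ} (L : Fin k → ℕ) (x : List X) : Prop :=
  ∃ a : Fin k → X, x = S.word L a ∧ S.IsLambdaFamily L a

/-- The bijection `b` of `X^n` applying `r` to the entries in (0-based) positions `j` and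
`j + 1` and fixing all other entries. -/
def bmap (S : NDIS X) {n : ℕ} (j : ℕ) (hj : j + 1 < n) (x : Fin n → X) : Fin n → X :=
  fun t =>
    if (t : ℕ) = j then S.σ (x ⟨j, by omega⟩) (x ⟨j + 1, hj⟩)
    else if (t : ℕ) = j + 1 then S.τ (x ⟨j + 1, hj⟩) (x ⟨j, by omega⟩)
    else x t

/-- One elementary move on `X^n` (as functions `Fin n → X`). -/
def StepF (S : NDIS X) {n : ℕ} (x y : Fin n → X) : Prop :=
  ∃ (j : ℕ) (hj : j + 1 < n), y = S.bmap j hj x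

end NDIS

/-- The offset `λ_1 + ⋯ + λ_i` of the `i`-th block (0-based). -/
def blockOffset {k : ℕ} (L : Fin k → ℕ) (i : Fin k) : ℕ :=
  ∑ t ∈ Finset.univ.filter (fun t => t < i), L t

/-- A `(λ_1, …, λ_k)`-shuffle: a permutation strictly increasing on each consecutive block. -/
def IsShuffle {k n : ℕ} (L : Fin k → ℕ) (θ : Equiv.Perm (Fin n)) : Prop :=
  ∀ (i : Fin k) (p q : Fin n), blockOffset L i ≤ (p : ℕ) → p < q →
    (q : ℕ) < blockOffset L i + L i → θ p < θ q
/-!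
For a word `x = x₁ ⋯ xₙ` put `J(x)_p = τ_{x_{p+1} ⋯ x_n}(x_p)`. Involutivity and the braid
relation show that `J` turns the move `b_j` into the transposition of the letters in positions
`j, j + 1`, so `J(φ(g) x) = J(x) ∘ g⁻¹`; as `J` is injective, the stabilizer of `x` is the
stabilizer of the word `J(x)` under place permutations. Since `τ_{Ψ_k(a)}(D^k(a)) = a`, we get
`J(Ψ_k(a)) = a^k`, so on a `λ`-element `J` is constant on each block, with value `τ_w(a_i)` on the
`i`-th block, `w` being the part of `x` to its right. The defining condition of a `λ`-element says
exactly that these values are pairwise distinct, hence `g` fixes `x` iff it maps every block to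
itself.
-/

theorem List.getElem_append_cons_cons_swap {α : Type*} (P Q : List α) (A B : α) (p : ℕ)
    (hp : p < (P ++ B :: A :: Q).length) :
    (P ++ B :: A :: Q)[p] =
      (P ++ A :: B :: Q)[Equiv.swap P.length (P.length + 1) p]'(by
        rw [Equiv.swap_apply_def]; split_ifs <;> simp_all) := by
  rcases lt_trichotomy p P.length with h | rfl | h
  · simp [Equiv.swap_apply_of_ne_of_ne, h, h.ne, (h.trans (Nat.lt_succ_self _)).ne,
      List.getElem_append_left]
  · simp
  · rcases (Nat.succ_le_of_lt h).eq_or_lt with h' | h'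
    · subst h'; simp
    · simp only [Equiv.swap_apply_of_ne_of_ne (show p ≠ P.length by omega)
        (show p ≠ P.length + 1 by omega)]
      rw [List.getElem_append_right (by omega), List.getElem_append_right (by omega)]
      obtain ⟨d, rfl⟩ : ∃ d, p = P.length + 2 + d := ⟨p - P.length - 2, by omega⟩
      simp [show P.length + 2 + d - P.length = d + 2 by omega]

theorem List.exists_sum_take_le_lt (l : List ℕ) {p : ℕ} (hp : p < l.sum) :
    ∃ (i : ℕ) (hi : i < l.length), (l.take i).sum ≤ p ∧ p < (l.take i).sum + l[i] := by
  induction l generalizing p with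
  | nil => simp at hp
  | cons q t ih =>
    by_cases hq : p < q
    · exact ⟨0, by simp, by simp, by simpa using hq⟩
    · obtain ⟨i, hi, h1, h2⟩ := ih (p := p - q) (by simp at hp; omega)
      exact ⟨i + 1, by simpa using hi, by simp; omega, by simp; omega⟩

theorem blockOffset_eq_sum_take {k : ℕ} (L : Fin k → ℕ) (i : Fin k) :
    blockOffset L i = ((List.ofFn L).take i).sum := by
  rw [List.sum_take_ofFn]; rfl

theorem exists_blockOffset_le_lt {k : ℕ} (L : Fin k → ℕ) {p : ℕ} (hp : p < ∑ t, L t) :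
    ∃ i, blockOffset L i ≤ p ∧ p < blockOffset L i + L i := by
  rw [← List.sum_ofFn] at hp
  obtain ⟨i, hi, h⟩ := (List.ofFn L).exists_sum_take_le_lt hp
  rw [List.length_ofFn] at hi
  exact ⟨⟨i, hi⟩, by simpa [blockOffset_eq_sum_take] using h⟩

theorem forall_apply_eq_iff_forall_block {α ι Y : Type*} {f : α → Y} {c : ι → Y}
    (hc : Function.Injective c) (B : ι → α → Prop) (hcover : ∀ p, ∃ i, B i p)
    (hf : ∀ i p, B i p → f p = c i) (g : α → α) :
    (∀ p, f (g p) = f p) ↔ ∀ i p, B i p → B i (g p) := by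
  constructor
  · intro hg i p hp
    obtain ⟨i', hi'⟩ := hcover (g p)
    obtain rfl : i' = i := hc ((hf i' _ hi').symm.trans ((hg p).trans (hf i p hp)))
    exact hi'
  · intro hg p
    obtain ⟨i, hi⟩ := hcover p
    rw [hf i _ (hg i p hi), hf i p hi]

namespace NDIS

variable (S : NDIS X)

lemma tau_D (a : X) : S.τ a (S.D a) = a := (S.τ a).apply_symm_apply a

lemma tau_tau_sigma (i j : X) : S.τ (S.τ j i) (S.σ i j) = j :=
  congrArg Prod.snd (S.invol (i, j))

lemma sigma_D (a : X) : S.σ (S.D a) a = S.D a := by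
  have h := S.tau_tau_sigma (S.D a) a
  rw [tau_D] at h
  exact (S.τ a).injective (h.trans (S.tau_D a).symm)

lemma D_injective : Function.Injective S.D := fun p q h =>
  (S.σ (S.D q)).injective ((h ▸ S.sigma_D p).trans (S.sigma_D q).symm)

lemma leftInverse_Dinv_D [Nonempty X] : Function.LeftInverse S.Dinv S.D :=
  Function.leftInverse_invFun S.D_injective

lemma tau_braid (i j z : X) : S.τ (S.τ j i) (S.τ (S.σ i j) z) = S.τ j (S.τ i z) :=
  (congrArg (fun p => p.2.2) (congrFun S.braid (z, i, j))).symm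

@[simp] lemma tauWord_cons (a : X) (l : List X) (z : X) :
    S.tauWord (a :: l) z = S.tauWord l (S.τ a z) := rfl

lemma tauWord_append (u v : List X) (z : X) :
    S.tauWord (u ++ v) z = S.tauWord v (S.tauWord u z) := by
  simp [tauWord, List.foldl_append]

lemma tauWord_injective (l : List X) : Function.Injective (S.tauWord l) := by
  induction l with
  | nil => exact Function.injective_id
  | cons a l ih => exact ih.comp (S.τ a).injective

lemma tauWord_sigma_tau_cons (i j : X) (v : List X) :
    S.tauWord (S.σ i j :: S.τ j i :: v) = S.tauWord (i :: j :: v) := by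
  funext z
  simp only [tauWord_cons, tau_braid]

def J (S : NDIS X) : List X → List X
  | [] => []
  | a :: l => S.tauWord l a :: S.J l

@[simp] lemma J_nil : S.J [] = [] := rfl

@[simp] lemma J_cons (a : X) (l : List X) : S.J (a :: l) = S.tauWord l a :: S.J l := rfl

@[simp] lemma length_J (l : List X) : (S.J l).length = l.length := by
  induction l <;> simp [*]

lemma J_append (u v : List X) : S.J (u ++ v) = (S.J u).map (S.tauWord v) ++ S.J v := by
  induction u <;> simp [*, tauWord_append]

lemma J_injective : Function.Injective S.J := by
  intro l l' h
  induction l generalizing l' with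
  | nil => cases l' <;> simp_all
  | cons a l ih =>
    cases l' with
    | nil => simp at h
    | cons b m =>
      simp only [J_cons, List.cons.injEq] at h
      obtain rfl := ih h.2
      rw [S.tauWord_injective l h.1]

lemma J_append_sigma_tau_cons (u v : List X) (i j : X) :
    S.J (u ++ S.σ i j :: S.τ j i :: v) =
      (S.J u).map (S.tauWord (i :: j :: v)) ++
        S.tauWord v j :: S.tauWord v (S.τ j i) :: S.J v := by
  rw [J_append, tauWord_sigma_tau_cons]
  simp [tau_tau_sigma]

lemma J_append_cons_cons (u v : List X) (i j : X) :
    S.J (u ++ i :: j :: v) =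
      (S.J u).map (S.tauWord (i :: j :: v)) ++
        S.tauWord v (S.τ j i) :: S.tauWord v j :: S.J v := by
  simp [J_append]

lemma exists_ofFn_bmap {n : ℕ} (j : ℕ) (hj : j + 1 < n) (x : Fin n → X) :
    ∃ u v : List X, u.length = j ∧
      List.ofFn x = u ++ x ⟨j, by omega⟩ :: x ⟨j + 1, hj⟩ :: v ∧
      List.ofFn (S.bmap j hj x) =
        u ++ S.σ (x ⟨j, by omega⟩) (x ⟨j + 1, hj⟩) ::
          S.τ (x ⟨j + 1, hj⟩) (x ⟨j, by omega⟩) :: v := by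
  have hsplit (y : Fin n → X) : List.ofFn y =
      (List.ofFn y).take j ++
        y ⟨j, by omega⟩ :: y ⟨j + 1, hj⟩ :: (List.ofFn y).drop (j + 2) := by
    conv_lhs => rw [← List.take_append_drop j (List.ofFn y)]
    rw [List.drop_eq_getElem_cons (by simp; omega), List.drop_eq_getElem_cons (by simpa using hj)]
    simp
  refine ⟨(List.ofFn x).take j, (List.ofFn x).drop (j + 2), by simp; omega, hsplit x, ?_⟩
  rw [hsplit (S.bmap j hj x)]
  congr 1
  · apply List.ext_getElem (by simp)
    intro m h _
    simp only [List.length_take, List.length_ofFn] at h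
    simp [bmap, show m ≠ j by omega, show m ≠ j + 1 by omega]
  · simp only [bmap, ↓reduceIte, List.cons.injEq, true_and]
    refine ⟨by simp, ?_⟩
    apply List.ext_getElem (by simp)
    intro m _ _
    simp [bmap, show j + 2 + m ≠ j by omega, show j + 2 + m ≠ j + 1 by omega]

def Jfun {n : ℕ} (x : Fin n → X) (t : Fin n) : X := (S.J (List.ofFn x))[(t : ℕ)]'(by simp)

lemma Jfun_injective {n : ℕ} : Function.Injective (S.Jfun : (Fin n → X) → Fin n → X) := by
  intro x y h
  refine List.ofFn_injective (S.J_injective (List.ext_getElem (by simp) fun m hm _ => ?_))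
  simpa [Jfun] using congrFun h ⟨m, by simpa using hm⟩

lemma Jfun_bmap {n : ℕ} (j : ℕ) (hj : j + 1 < n) (x : Fin n → X) :
    S.Jfun (S.bmap j hj x) = S.Jfun x ∘ Equiv.swap ⟨j, by omega⟩ ⟨j + 1, hj⟩ := by
  obtain ⟨u, v, hu, hx, hbx⟩ := S.exists_ofFn_bmap j hj x
  have hJx := congrArg S.J hx
  have hJbx := congrArg S.J hbx
  rw [J_append_cons_cons] at hJx
  rw [J_append_sigma_tau_cons] at hJbx
  funext t
  simp only [Jfun, Function.comp_apply]
  rw [List.getElem_of_eq hJbx, List.getElem_of_eq hJx, List.getElem_append_cons_cons_swap]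
  congr 1
  simp only [List.length_map, length_J, hu, Equiv.swap_apply_def]
  split_ifs <;> simp_all [Fin.ext_iff]

lemma Jfun_map {n : ℕ} (φ : Equiv.Perm (Fin n) →* Equiv.Perm (Fin n → X))
    (hφ : ∀ (j : ℕ) (hj : j + 1 < n),
      ⇑(φ (Equiv.swap ⟨j, by omega⟩ ⟨j + 1, hj⟩)) = S.bmap j hj)
    (g : Equiv.Perm (Fin n)) (x : Fin n → X) : S.Jfun (φ g x) = S.Jfun x ∘ ⇑g⁻¹ := by
  cases n with
  | zero => rw [Subsingleton.elim g 1]; simp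
  | succ m =>
    have hg := (Equiv.Perm.mclosure_swap_castSucc_succ m).symm ▸ Submonoid.mem_top g
    induction hg using Submonoid.closure_induction generalizing x with
    | mem g hg =>
      obtain ⟨i, rfl⟩ := hg
      have hφi := hφ i (by omega)
      simp only [Fin.castSucc, Fin.succ, Fin.castAdd, Fin.castLE] at hφi ⊢
      rw [hφi, Jfun_bmap, Equiv.swap_inv]
    | one => simp
    | mul g h _ _ ihg ihh =>
      rw [map_mul, Equiv.Perm.mul_apply, ihg, ihh, mul_inv_rev, Equiv.Perm.coe_mul,
        Function.comp_assoc]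

lemma apply_eq_self_iff {n : ℕ} (φ : Equiv.Perm (Fin n) →* Equiv.Perm (Fin n → X))
    (hφ : ∀ (j : ℕ) (hj : j + 1 < n),
      ⇑(φ (Equiv.swap ⟨j, by omega⟩ ⟨j + 1, hj⟩)) = S.bmap j hj)
    (g : Equiv.Perm (Fin n)) (x : Fin n → X) :
    φ g x = x ↔ ∀ p, S.Jfun x (g p) = S.Jfun x p := by
  rw [← S.Jfun_injective.eq_iff, S.Jfun_map φ hφ, funext_iff]
  exact ⟨fun h p => by simpa using (h (g p)).symm,
    fun h p => by simpa using (h (g⁻¹ p)).symm⟩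

lemma Psi_succ (m : ℕ) (a : X) : S.Psi (m + 1) a = S.D^[m] a :: S.Psi m a := by
  simp only [Psi, List.range_succ_eq_map, List.map_cons, List.map_map]
  congr 2
  funext t
  simp only [Function.comp_apply]
  congr 1
  omega

@[simp] lemma length_Psi (m : ℕ) (a : X) : (S.Psi m a).length = m := by simp [Psi]

lemma tauWord_Psi (m : ℕ) (a : X) : S.tauWord (S.Psi m a) (S.D^[m] a) = a := by
  induction m with
  | zero => rfl
  | succ m ih => rw [Psi_succ, tauWord_cons, Function.iterate_succ_apply', tau_D, ih]

lemma J_Psi (m : ℕ) (a : X) : S.J (S.Psi m a) = List.replicate m a := by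
  induction m with
  | zero => rfl
  | succ m ih => rw [Psi_succ, J_cons, tauWord_Psi, ih, List.replicate_succ]

variable {k : ℕ} (L : Fin k → ℕ) (a : Fin k → X)

lemma length_word : (S.word L a).length = ∑ t, L t := by
  simp [word, List.sum_ofFn]

def blockValue (i : Fin k) : X :=
  S.tauWord (((List.ofFn fun t => S.Psi (L t) (a t)).drop (i + 1)).flatten) (a i)

lemma J_word_getElem (i : Fin k) {p : ℕ} (h₁ : blockOffset L i ≤ p)
    (h₂ : p < blockOffset L i + L i) (hp : p < (S.J (S.word L a)).length) :
    (S.J (S.word L a))[p] = S.blockValue L a i := by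
  set bs := List.ofFn fun t => S.Psi (L t) (a t)
  have hi : (i : ℕ) < bs.length := by simp [bs]
  have hsplit : S.word L a =
      (bs.take i).flatten ++ (S.Psi (L i) (a i) ++ (bs.drop (i + 1)).flatten) := by
    have hbs : bs = bs.take i ++ bs[(i : ℕ)] :: bs.drop (i + 1) := by
      rw [← List.drop_eq_getElem_cons hi, List.take_append_drop]
    rw [word, ← List.flatten_cons, ← List.flatten_append]
    simpa [bs] using congrArg List.flatten hbs
  have hoff : ((bs.take i).flatten).length = blockOffset L i := by
    simp [bs, blockOffset_eq_sum_take, List.map_take, List.map_ofFn, Function.comp_def]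
  rw [List.getElem_of_eq (congrArg S.J hsplit)]
  simp only [J_append, J_Psi, List.map_replicate]
  rw [List.getElem_append_right (by simp [hoff, h₁]),
    List.getElem_append_left (by simp [hoff]; omega), List.getElem_replicate]
  rfl

lemma blockValue_ne_of_lt [Nonempty X] (hfam : S.IsLambdaFamily L a) {i j : Fin k} (hij : i < j) :
    S.blockValue L a i ≠ S.blockValue L a j := by
  intro heq
  simp only [blockValue] at heq
  set bs := List.ofFn fun t => S.Psi (L t) (a t)
  have hj : (j : ℕ) < bs.length := by simp [bs]
  have hsplit : (bs.drop (i + 1)).flatten =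
      S.midword L a i j ++ (S.Psi (L j) (a j) ++ (bs.drop (j + 1)).flatten) := by
    have hdrop : bs.drop (i + 1) =
        (bs.drop (i + 1)).take (j - i - 1) ++ bs[(j : ℕ)] :: bs.drop (j + 1) := by
      rw [← List.drop_eq_getElem_cons hj, show bs.drop j = (bs.drop (i + 1)).drop (j - i - 1) by
        rw [List.drop_drop]; congr 1; omega, List.take_append_drop]
    rw [hdrop, List.flatten_append, List.flatten_cons]
    simp [bs, midword]
  rw [hsplit, tauWord_append, tauWord_append] at heq
  have hmid := S.tauWord_injective _ (S.tauWord_injective _ heq |>.trans (S.tauWord_Psi _ _).symm)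
  apply hfam i j hij
  rw [hmid, S.leftInverse_Dinv_D.iterate]

lemma blockValue_injective [Nonempty X] (hfam : S.IsLambdaFamily L a) :
    Function.Injective (S.blockValue L a) := by
  intro i j h
  by_contra hne
  rcases lt_or_gt_of_ne hne with hij | hji
  · exact S.blockValue_ne_of_lt L a hfam hij h
  · exact S.blockValue_ne_of_lt L a hfam hji h.symm

end NDIS

/-- Let `(X, r)` be a non-degenerate involutive solution with `|X| = m ≥ 2`,
`λ ∈ P(n, m)` with positive parts `L`, `x ∈ X^n` a `λ`-element (regarded as a function
`Fin n → X`), and `φ : S_n → Perm(X^n)` the homomorphism sending each adjacent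
transposition to the corresponding `b_j`. Then the stabilizer `{g | φ(g)(x) = x}` is
exactly the Young subgroup `S_{λ_1} × ⋯ × S_{λ_k}`, i.e. the set of permutations mapping
each consecutive block `[λ_1 + ⋯ + λ_{i−1}, λ_1 + ⋯ + λ_i)` into itself. -/
theorem stabilizer_of_lambda_element {X : Type*} [Nonempty X]
    (S : NDIS X) {n k : ℕ} (L : Fin k → ℕ)
    (a : Fin k → X) (hfam : S.IsLambdaFamily L a)
    (hw : (S.word L a).length = n)
    (φ : Equiv.Perm (Fin n) →* Equiv.Perm (Fin n → X))
    (hφ : ∀ (j : ℕ) (hj : j + 1 < n),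
      ⇑(φ (Equiv.swap ⟨j, by omega⟩ ⟨j + 1, hj⟩)) = S.bmap j hj) :
    {g : Equiv.Perm (Fin n) |
        φ g (fun t => (S.word L a).get (Fin.cast hw.symm t)) =
          fun t => (S.word L a).get (Fin.cast hw.symm t)} =
      {g : Equiv.Perm (Fin n) | ∀ (i : Fin k) (p : Fin n),
        blockOffset L i ≤ (p : ℕ) ∧ (p : ℕ) < blockOffset L i + L i →
          blockOffset L i ≤ ((g p : Fin n) : ℕ) ∧
            ((g p : Fin n) : ℕ) < blockOffset L i + L i} := by
  set x : Fin n → X := fun t => (S.word L a).get (Fin.cast hw.symm t)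
  have hx : List.ofFn x = S.word L a := (List.ofFn_congr hw _).symm.trans (List.ofFn_get _)
  have hJx : ∀ i (p : Fin n), blockOffset L i ≤ p ∧ p < blockOffset L i + L i →
      S.Jfun x p = S.blockValue L a i := fun i p hp =>
    (List.getElem_of_eq (congrArg S.J hx) _).trans (S.J_word_getElem L a i hp.1 hp.2 _)
  have hcover (p : Fin n) : ∃ i, blockOffset L i ≤ p ∧ p < blockOffset L i + L i :=
    exists_blockOffset_le_lt L (S.length_word L a ▸ hw ▸ p.isLt)
  ext g
  exact (S.apply_eq_self_iff φ hφ g x).trans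
    (forall_apply_eq_iff_forall_block (S.blockValue_injective L a hfam) _ hcover hJx g)
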